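/- The join of sets of mappings is associative: Join(Join(M1, M2), M3) = Join(M1, Join(M2, M3)) as sets of mappings on (X1 ∪ X2) ∪ X3 = X1 ∪ (X2 ∪ X3). -/

import Mathlib

universe u

structure RGraph (A : Type u) where
  N : Set A
  T : Set (A × A × A)
  subj_mem : ∀ t ∈ T, t.1 ∈ N
  obj_mem : ∀ t ∈ T, t.2.2 ∈ N

namespace RGraph

variable {A : Type u}

/-- The labels of a graph: its nodes together with the predicates of its triples. -/
def labels (X : RGraph A) : Set A :=
  X.N ∪ {p | ∃ t ∈ X.T, t.2.1 = p}

/-- Componentwise union of graphs. -/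
def union (X1 X2 : RGraph A) : RGraph A where
  N := X1.N ∪ X2.N
  T := X1.T ∪ X2.T
  subj_mem := by
    rintro t (h | h)
    · exact Or.inl (X1.subj_mem t h)
    · exact Or.inr (X2.subj_mem t h)
  obj_mem := by
    rintro t (h | h)
    · exact Or.inl (X1.obj_mem t h)
    · exact Or.inr (X2.obj_mem t h)

/-- Componentwise intersection of graphs. -/
def inter (X1 X2 : RGraph A) : RGraph A where
  N := X1.N ∩ X2.N
  T := X1.T ∩ X2.T
  subj_mem := fun t h => ⟨X1.subj_mem t h.1, X2.subj_mem t h.2⟩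
  obj_mem := fun t h => ⟨X1.obj_mem t h.1, X2.obj_mem t h.2⟩

/-- `X'` is a subgraph of `X`. -/
def Subgraph (X' X : RGraph A) : Prop := X'.N ⊆ X.N ∧ X'.T ⊆ X.T

end RGraph

variable {A : Type u}

/-- A morphism of graphs on `A` : a partial function (modelled as an `Option`-valued
function, `none` meaning undefined, and undefined outside the labels of the domain)
from the labels of `X` to the labels of `Y`, preserving nodes and triples. -/
def IsMorphism (X Y : RGraph A) (f : A → Option A) : Prop :=
  (∀ x, x ∉ X.labels → f x = none) ∧
  (∀ x y, f x = some y → y ∈ Y.labels) ∧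
  (∀ n ∈ X.N, ∀ y, f n = some y → y ∈ Y.N) ∧
  (∀ t ∈ X.T, ∀ s' p' o', f t.1 = some s' → f t.2.1 = some p' → f t.2.2 = some o' →
    ((s', p', o') : A × A × A) ∈ Y.T)

/-- Composition of partial functions: defined iff both steps are defined. -/
def pcomp (g f : A → Option A) : A → Option A := fun x => (f x).bind g

open Classical in
/-- The identity partial function on the labels of `X`. -/
noncomputable def idOn (X : RGraph A) : A → Option A :=
  fun x => if x ∈ X.labels then some x else none

open Classical in
/-- Restriction of a partial function to the labels of `X'`. -/
noncomputable def restrictMap (X' : RGraph A) (f : A → Option A) : A → Option A :=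
  fun x => if x ∈ X'.labels then f x else none

/-- Labels are built from three disjoint countably infinite sets:
resource identifiers `i`, blanks `b` and variables `v`. -/
inductive Lbl : Type where
  | i : ℕ → Lbl
  | b : ℕ → Lbl
  | v : ℕ → Lbl
deriving DecidableEq

/-- Being a resource identifier. -/
def Lbl.isI : Lbl → Prop
  | .i _ => True
  | _ => False

/-- Being a variable. -/
def Lbl.isV : Lbl → Prop
  | .v _ => True
  | _ => False

/-- A data graph is a (finite) graph whose labels are resource identifiers or blanks. -/
def IsDataGraph (Y : RGraph Lbl) : Prop := ∀ x ∈ Y.labels, ¬ x.isV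

/-- A query graph is a finite graph on `Lbl`. -/
def IsQueryGraph (X : RGraph Lbl) : Prop := X.N.Finite ∧ X.T.Finite

/-- A mapping from a query graph `X` to a data graph `Y` is a graph morphism fixing
the resource identifiers. -/
def IsMapping (X Y : RGraph Lbl) (m : Lbl → Option Lbl) : Prop :=
  IsMorphism X Y m ∧ ∀ x ∈ X.labels, x.isI → m x = some x

/-- The blanks and variables among the labels of `X`. -/
def bvLabels (X : RGraph Lbl) : Set Lbl := {x | x ∈ X.labels ∧ ¬ x.isI}

/-- Two mappings are compatible if they agree (including definedness) on the common
blanks and variables of their domains. -/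
def Compatible (X1 X2 : RGraph Lbl) (m1 m2 : Lbl → Option Lbl) : Prop :=
  ∀ x ∈ bvLabels X1 ∩ bvLabels X2, m1 x = m2 x

open Classical in
/-- The join of two compatible mappings: it coincides with `m1` on the labels of `X1`
and with `m2` elsewhere. -/
noncomputable def joinMap (X1 : RGraph Lbl) (m1 m2 : Lbl → Option Lbl) : Lbl → Option Lbl :=
  fun x => if x ∈ X1.labels then m1 x else m2 x

/-- Join of two sets of mappings. -/
noncomputable def JoinSet (X1 X2 : RGraph Lbl) (M1 M2 : Set (Lbl → Option Lbl)) :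
    Set (Lbl → Option Lbl) :=
  {m | ∃ m1 ∈ M1, ∃ m2 ∈ M2, Compatible X1 X2 m1 m2 ∧ m = joinMap X1 m1 m2}

/-- Restriction of a set of mappings to a subgraph `X'`. -/
noncomputable def RestrictSet (X' : RGraph Lbl) (M : Set (Lbl → Option Lbl)) :
    Set (Lbl → Option Lbl) :=
  (restrictMap X') '' M

open Classical in
/-- Extension by undefined functions `Ext_⊥(m, X')`: new labels in `I` are fixed,
new blanks and variables are left undefined. -/
noncomputable def extBot (X X' : RGraph Lbl) (m : Lbl → Option Lbl) : Lbl → Option Lbl :=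
  fun x => if x ∈ X.labels then m x else if x ∈ X'.labels ∧ x.isI then some x else none

/-- Union of two sets of mappings: set-theoretic union of their extensions by
undefined functions to the union of their domains. -/
noncomputable def UnionSet (X1 X2 : RGraph Lbl) (M1 M2 : Set (Lbl → Option Lbl)) :
    Set (Lbl → Option Lbl) :=
  (extBot X1 (X1.union X2)) '' M1 ∪ (extBot X2 (X1.union X2)) '' M2

/-- A total mapping: a mapping defined on all the labels of its domain. -/
def TotalMapping (X Y : RGraph Lbl) (m : Lbl → Option Lbl) : Prop :=
  IsMapping X Y m ∧ ∀ x ∈ X.labels, m x ≠ none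

/-! Compatibility with a join splits into compatibility with its factors: on the common blanks
and variables, `m1 ⋈ m2` agrees with `m1` on the labels of `X1` and, by compatibility, with `m2`
on those of `X2`. Hence both sides consist of the maps `m1 ⋈ m2 ⋈ m3` for pairwise compatible
triples, and the underlying maps agree because `joinMap` is associative pointwise. -/

theorem RGraph.labels_union (X1 X2 : RGraph A) :
    (X1.union X2).labels = X1.labels ∪ X2.labels := by
  ext x
  simp only [RGraph.labels, RGraph.union, Set.mem_union, Set.mem_ofPred_eq]
  aesop

theorem bvLabels_union (X1 X2 : RGraph Lbl) :
    bvLabels (X1.union X2) = bvLabels X1 ∪ bvLabels X2 := by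
  ext x
  simp only [bvLabels, RGraph.labels_union, Set.mem_ofPred_eq, Set.mem_union]
  tauto

theorem compatible_comm {X1 X2 : RGraph Lbl} {m1 m2 : Lbl → Option Lbl} :
    Compatible X1 X2 m1 m2 ↔ Compatible X2 X1 m2 m1 := by
  simp only [Compatible, Set.inter_comm (bvLabels X1), eq_comm]

theorem joinMap_of_mem {X1 : RGraph Lbl} {m1 m2 : Lbl → Option Lbl} {x : Lbl}
    (hx : x ∈ X1.labels) : joinMap X1 m1 m2 x = m1 x :=
  if_pos hx

theorem Compatible.joinMap_eq_right {X1 X2 : RGraph Lbl} {m1 m2 : Lbl → Option Lbl}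
    (h : Compatible X1 X2 m1 m2) {x : Lbl} (hx : x ∈ bvLabels X2) :
    joinMap X1 m1 m2 x = m2 x := by
  by_cases hx1 : x ∈ X1.labels
  · rw [joinMap_of_mem hx1]
    exact h x ⟨⟨hx1, hx.2⟩, hx⟩
  · exact if_neg hx1

theorem Compatible.union_left_iff {X1 X2 X3 : RGraph Lbl} {m1 m2 m3 : Lbl → Option Lbl}
    (h12 : Compatible X1 X2 m1 m2) :
    Compatible (X1.union X2) X3 (joinMap X1 m1 m2) m3 ↔
      Compatible X1 X3 m1 m3 ∧ Compatible X2 X3 m2 m3 := by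
  simp only [Compatible, bvLabels_union, Set.union_inter_distrib_right, Set.mem_union,
    or_imp, forall_and]
  refine and_congr (forall₂_congr fun x hx => ?_) (forall₂_congr fun x hx => ?_)
  · rw [joinMap_of_mem hx.1.1]
  · rw [h12.joinMap_eq_right hx.1]

theorem joinMap_assoc (X1 X2 : RGraph Lbl) (m1 m2 m3 : Lbl → Option Lbl) :
    joinMap (X1.union X2) (joinMap X1 m1 m2) m3 = joinMap X1 m1 (joinMap X2 m2 m3) := by
  funext x
  by_cases h1 : x ∈ X1.labels <;> by_cases h2 : x ∈ X2.labels <;>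
    simp [joinMap, RGraph.labels_union, h1, h2]

theorem joinSet_assoc_general (X1 X2 X3 : RGraph Lbl)
    (M1 M2 M3 : Set (Lbl → Option Lbl)) :
    JoinSet (X1.union X2) X3 (JoinSet X1 X2 M1 M2) M3 =
      JoinSet X1 (X2.union X3) M1 (JoinSet X2 X3 M2 M3) := by
  ext m
  constructor
  · rintro ⟨_, ⟨m1, h1, m2, h2, c12, rfl⟩, m3, h3, c, rfl⟩
    obtain ⟨c13, c23⟩ := c12.union_left_iff.1 c
    refine ⟨m1, h1, _, ⟨m2, h2, m3, h3, c23, rfl⟩, ?_, joinMap_assoc X1 X2 m1 m2 m3⟩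
    exact compatible_comm.2 <|
      c23.union_left_iff.2 ⟨compatible_comm.1 c12, compatible_comm.1 c13⟩
  · rintro ⟨m1, h1, _, ⟨m2, h2, m3, h3, c23, rfl⟩, c, rfl⟩
    obtain ⟨c21, c31⟩ := c23.union_left_iff.1 (compatible_comm.1 c)
    have c12 : Compatible X1 X2 m1 m2 := compatible_comm.2 c21
    refine ⟨_, ⟨m1, h1, m2, h2, c12, rfl⟩, m3, h3, ?_, (joinMap_assoc X1 X2 m1 m2 m3).symm⟩
    exact c12.union_left_iff.2 ⟨compatible_comm.2 c31, c23⟩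

/-- The join of sets of mappings is associative. -/
theorem joinSet_assoc (X1 X2 X3 Y1 Y2 Y3 : RGraph Lbl)
    (M1 M2 M3 : Set (Lbl → Option Lbl))
    (hd1 : IsDataGraph Y1) (hd2 : IsDataGraph Y2) (hd3 : IsDataGraph Y3)
    (hM1 : ∀ m ∈ M1, IsMapping X1 Y1 m) (hM2 : ∀ m ∈ M2, IsMapping X2 Y2 m)
    (hM3 : ∀ m ∈ M3, IsMapping X3 Y3 m) :
    JoinSet (X1.union X2) X3 (JoinSet X1 X2 M1 M2) M3 =
      JoinSet X1 (X2.union X3) M1 (JoinSet X2 X3 M2 M3) :=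
  joinSet_assoc_general X1 X2 X3 M1 M2 M3
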